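/- arXiv:2010.15332 — 3 statements merged into one kernel-verified Lean document; each statement's English description precedes it below -/
import Mathlib

section
/- Let n > m ≥ 2, and let F_n, F_m : [0,1] → [0,1] be open piecewise monotone maps with n−1 resp. m−1 critical points satisfying F_n ∘ F_m^{-1} = F_m^{-1} ∘ F_n. Let 0 < t_1 < … < t_{n-1} < 1 be the critical points of F_n and 0 < t̂_1 < … < t̂_{m-1} < 1 the critical points of F_m. Then for all admissible i, j: t_i < t̂_j < t_{i+1} if and only if i = ⌊(n/m)·j⌋. -/
/-!
Strong commutation gives `Fm ∘ Fn = Fn ∘ Fm`, so `E = Fn⁻¹(Fm⁻¹{0,1}) = Fm⁻¹(Fn⁻¹{0,1})` is a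
finite set containing every `t i` and every `s j`. Each lap `[t k, t (k+1))` of `Fn` contains
exactly `m` points of `E` and each lap of `Fm` exactly `n`, so `E` has `i * m` points below `t i`
and `j * n` points below `s j`; hence `t i < s j ↔ i * m < j * n`.

It remains to see that an interior `s j` is never some `t i = c`. Near `c` the map `Fm` folds,
so a value `y` close to `Fm c` has preimages `a' < c < b'` close to `c`. Then `Fn a'` and `Fn b'`
lie near `Fn c ∈ {0, 1}`, where `Fm` is injective, and `Fm (Fn a') = Fn y = Fm (Fn b')` forces
`Fn a' = Fn b'`. For generic `y` this contradicts strong commutation, under which `Fn` maps the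
`m`-point fiber `Fm⁻¹{y}` onto the `m`-point fiber `Fm⁻¹{Fn y}`.
-/

open Filter Set

section Defs

variable {Y : Type*}

/-- An `n`-orbit of a set-valued map `F`: a tuple `(x 0, …, x (n-1))` with
`x (k+1) ∈ F (x k)`. -/
def IsOrbit (F : Y → Set Y) (n : ℕ) (x : ℕ → Y) : Prop :=
  ∀ k : ℕ, k + 1 < n → x (k + 1) ∈ F (x k)

/-- A set `S` of `n`-tuples is `(n,ε)`-separated w.r.t. the distance `d`. -/
def IsSepTuples (d : Y → Y → ℝ) (n : ℕ) (ε : ℝ) (S : Set (ℕ → Y)) : Prop :=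
  ∀ x ∈ S, ∀ y ∈ S, (∃ k < n, x k ≠ y k) → ∃ k < n, ε < d (x k) (y k)

/-- The maximal cardinality of an `(n,ε)`-separated set of `n`-orbits of `F`. -/
noncomputable def sepCountD (d : Y → Y → ℝ) (F : Y → Set Y) (n : ℕ) (ε : ℝ) : ℕ :=
  sSup {m : ℕ | ∃ S : Finset (ℕ → Y),
    (∀ x ∈ S, IsOrbit F n x) ∧ IsSepTuples d n ε ↑S ∧ S.card = m}

/-- Topological entropy of a set-valued map `F`, with respect to a distance
function `d`, via `(n,ε)`-separated sets of orbits. -/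
noncomputable def svEntD (d : Y → Y → ℝ) (F : Y → Set Y) : EReal :=
  ⨆ (ε : ℝ) (_ : 0 < ε),
    Filter.atTop.limsup fun n : ℕ =>
      ((Real.log (sepCountD d F n ε) / n : ℝ) : EReal)

/-- Topological entropy of a set-valued map on a metric space. -/
noncomputable def svEnt [PseudoMetricSpace Y] (F : Y → Set Y) : EReal :=
  svEntD dist F

/-- Composition of set-valued maps: `(svComp G F) x = G (F x)`. -/
def svComp (G F : Y → Set Y) : Y → Set Y := fun x => ⋃ y ∈ F x, G y

/-- `n`-fold composition of a set-valued map. -/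
def svIter (F : Y → Set Y) : ℕ → Y → Set Y
  | 0 => fun x => {x}
  | n + 1 => svComp F (svIter F n)

/-- (Bowen) topological entropy of a single-valued map, as the set-valued
entropy of the associated singleton-valued map. -/
noncomputable def ent [PseudoMetricSpace Y] (f : Y → Y) : EReal :=
  svEnt fun x => {f x}

end Defs

/-- The inverse limit of the system of bonding maps `f i : X (i+1) → X i`. -/
abbrev InvLim {X : ℕ → Type*} (f : ∀ i : ℕ, X (i + 1) → X i) :=
  {x : ∀ i, X i // ∀ i, f i (x (i + 1)) = x i}

/-- A map of the unit interval is piecewise monotone if the interval splits into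
finitely many subintervals on which the map is injective. -/
def PiecewiseMonotone (f : unitInterval → unitInterval) : Prop :=
  ∃ n : ℕ, 0 < n ∧ ∃ c : Fin (n + 1) → unitInterval, StrictMono c ∧
    c 0 = 0 ∧ c (Fin.last n) = 1 ∧
    ∀ i : Fin n, Set.InjOn f (Set.Icc (c i.castSucc) (c i.succ))

/-- `c` is a critical point of `f`: an interior point at which `f` is not
locally monotone. -/
def IsCriticalPt (f : unitInterval → unitInterval) (c : unitInterval) : Prop :=
  c ≠ 0 ∧ c ≠ 1 ∧ ¬ ∃ U ∈ nhds c, MonotoneOn f U ∨ AntitoneOn f U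

/-- `f` is an open piecewise monotone map with `n - 1` critical points `t 1 < … < t (n-1)`:
it maps each of its `n` maximal intervals of monotonicity bijectively onto `[0,1]`. -/
def IsOpenFold (n : ℕ) (f : unitInterval → unitInterval)
    (t : Fin (n + 1) → unitInterval) : Prop :=
  Continuous f ∧ StrictMono t ∧ t 0 = 0 ∧ t (Fin.last n) = 1 ∧
    ∀ i : Fin n, Set.BijOn f (Set.Icc (t i.castSucc) (t i.succ)) Set.univ

/-- A monotone arc in `I × I`: a subcontinuum on which both coordinate
projections are injective (hence homeomorphisms onto their images). -/
def IsMonotoneArc (A : Set (unitInterval × unitInterval)) : Prop :=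
  IsCompact A ∧ IsConnected A ∧ Set.InjOn Prod.fst A ∧ Set.InjOn Prod.snd A

/-- Composition of relations on the unit interval: `relComp Γ Δ = Δ ∘ Γ`. -/
def relComp (Γ Δ : Set (unitInterval × unitInterval)) :
    Set (unitInterval × unitInterval) :=
  {p | ∃ y, (p.1, y) ∈ Γ ∧ (y, p.2) ∈ Δ}

open Topology

lemma lt_iff_encard_Iio_inter_lt {α : Type*} [LinearOrder α] {E : Set α} {x y : α} (hx : x ∈ E)
    (hfin : (Iio x ∩ E).Finite) : x < y ↔ (Iio x ∩ E).encard < (Iio y ∩ E).encard := by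
  refine ⟨fun hxy => hfin.encard_lt_encard ⟨inter_subset_inter_left _ (Iio_subset_Iio hxy.le),
    fun h => (h ⟨hxy, hx⟩).1.false⟩, fun h => ?_⟩
  by_contra! hyx
  exact h.not_ge (encard_le_encard (inter_subset_inter_left _ (Iio_subset_Iio hyx)))

lemma infinite_image_Ioo_inter_image_Ioo {α δ : Type*} [ConditionallyCompleteLinearOrder α]
    [TopologicalSpace α] [OrderTopology α] [DenselyOrdered α] [LinearOrder δ] [TopologicalSpace δ]
    [OrderClosedTopology δ] [DenselyOrdered δ] {f : α → δ} {a b c : α} (hac : a ≤ c) (hcb : c ≤ b)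
    (hf : ContinuousOn f (Icc a b)) (ha : f a ≠ f c) (hb : f b ≠ f c)
    (hc : IsBot (f c) ∨ IsTop (f c)) : (f '' Ioo a c ∩ f '' Ioo c b).Infinite := by
  have hl : ContinuousOn f (Icc a c) := hf.mono (Icc_subset_Icc_right hcb)
  have hr : ContinuousOn f (Icc c b) := hf.mono (Icc_subset_Icc_left hac)
  rcases hc with hbot | htop
  · refine Infinite.mono (inter_subset_inter (intermediate_value_Ioo' hac hl)
      (intermediate_value_Ioo hcb hr)) ?_
    rw [Ioo_inter_Ioo, sup_idem]
    exact Ioo_infinite (lt_inf_iff.2 ⟨(hbot _).lt_of_ne ha.symm, (hbot _).lt_of_ne hb.symm⟩)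
  · refine Infinite.mono (inter_subset_inter (intermediate_value_Ioo hac hl)
      (intermediate_value_Ioo' hcb hr)) ?_
    rw [Ioo_inter_Ioo, inf_idem]
    exact Ioo_infinite (sup_lt_iff.2 ⟨(htop _).lt_of_ne ha, (htop _).lt_of_ne hb⟩)

lemma apply_comm_of_image_preimage_eq {X : Type*} {F G : X → X}
    (hFG : ∀ x, F '' (G ⁻¹' {x}) = G ⁻¹' {F x}) (x : X) : G (F x) = F (G x) := by
  have hx : F x ∈ F '' (G ⁻¹' {G x}) := mem_image_of_mem F rfl
  rwa [hFG] at hx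

namespace unitInterval

lemma encard_zero_one : ({0, 1} : Set unitInterval).encard = 1 + 1 := by
  rw [encard_pair zero_ne_one, one_add_one_eq_two]

lemma isBot_or_isTop_of_mem_zero_one {e : unitInterval} (he : e ∈ ({0, 1} : Set unitInterval)) :
    IsBot e ∨ IsTop e := by
  rcases he with rfl | rfl
  exacts [.inl fun _ => unitInterval.nonneg', .inr fun _ => unitInterval.le_one']

lemma apply_mem_zero_one_of_bijOn {f : unitInterval → unitInterval} {a b : unitInterval}
    (hab : a ≤ b) (hf : ContinuousOn f (Icc a b)) (hbij : BijOn f (Icc a b) univ) :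
    f a ∈ ({0, 1} : Set unitInterval) ∧ f b ∈ ({0, 1} : Set unitInterval) := by
  have himage : f '' Icc a b = univ := hbij.image_eq
  rcases hf.strictMonoOn_of_injOn_Icc' hab hbij.injOn with hmono | hanti
  · have h := himage ▸ hmono.monotoneOn.image_Icc_subset
    exact ⟨.inl (le_antisymm (h (mem_univ 0)).1 unitInterval.nonneg'),
      .inr (le_antisymm unitInterval.le_one' (h (mem_univ 1)).2)⟩
  · have h := himage ▸ hanti.antitoneOn.image_Icc_subset
    exact ⟨.inr (le_antisymm unitInterval.le_one' (h (mem_univ 1)).2),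
      .inl (le_antisymm (h (mem_univ 0)).1 unitInterval.nonneg')⟩

end unitInterval

namespace IsOpenFold

section

variable {n : ℕ} {f : unitInterval → unitInterval} {t : Fin (n + 1) → unitInterval}
  {D : Set unitInterval} {d : ℕ}

lemma continuous (hf : IsOpenFold n f t) : Continuous f := hf.1

lemma strictMono (hf : IsOpenFold n f t) : StrictMono t := hf.2.1

lemma t_zero (hf : IsOpenFold n f t) : t 0 = 0 := hf.2.2.1

lemma t_last (hf : IsOpenFold n f t) : t (Fin.last n) = 1 := hf.2.2.2.1

lemma bijOn (hf : IsOpenFold n f t) (k : Fin n) :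
    BijOn f (Icc (t k.castSucc) (t k.succ)) univ :=
  hf.2.2.2.2 k

lemma apply_mem_zero_one (hf : IsOpenFold n f t) (k : Fin (n + 1)) :
    f (t k) ∈ ({0, 1} : Set unitInterval) := by
  have hlap (l : Fin n) := unitInterval.apply_mem_zero_one_of_bijOn
    (hf.strictMono l.castSucc_lt_succ).le hf.continuous.continuousOn (hf.bijOn l)
  rcases k.eq_castSucc_or_eq_last with ⟨l, rfl⟩ | rfl
  · exact (hlap l).1
  · cases n with
    | zero => exact absurd (hf.t_zero.symm.trans hf.t_last) zero_ne_one
    | succ n => exact (hlap (Fin.last n)).2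

lemma encard_Ico_inter_preimage (hf : IsOpenFold n f t) (hD : D.encard = d + 1)
    (h01 : {0, 1} ⊆ D) (k : Fin n) :
    (Ico (t k.castSucc) (t k.succ) ∩ f ⁻¹' D).encard = d := by
  have hle : t k.castSucc ≤ t k.succ := (hf.strictMono k.castSucc_lt_succ).le
  have hIcc : (Icc (t k.castSucc) (t k.succ) ∩ f ⁻¹' D).encard = d + 1 := by
    rw [← (hf.bijOn k).injOn.mono inter_subset_left |>.encard_image, image_inter_preimage,
      (hf.bijOn k).image_eq, univ_inter, hD]
  have hsucc : t k.succ ∈ f ⁻¹' D := h01 (hf.apply_mem_zero_one k.succ)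
  rw [← Ico_insert_right hle, insert_inter_of_mem hsucc,
    encard_insert_of_notMem (fun h => h.1.2.false)] at hIcc
  exact WithTop.add_right_cancel ENat.one_ne_top hIcc

lemma encard_Iio_inter_preimage (hf : IsOpenFold n f t) (hD : D.encard = d + 1)
    (h01 : {0, 1} ⊆ D) (i : Fin (n + 1)) :
    (Iio (t i) ∩ f ⁻¹' D).encard = (i : ℕ) * d := by
  induction i using Fin.induction with
  | zero => simp [hf.t_zero]
  | succ k ih =>
    rw [← Iio_union_Ico_eq_Iio (hf.strictMono k.castSucc_lt_succ).le, union_inter_distrib_right,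
      encard_union_eq ((Iio_disjoint_Ici le_rfl).mono inter_subset_left
        (inter_subset_left.trans Ico_subset_Ici_self)),
      ih, hf.encard_Ico_inter_preimage hD h01 k]
    push_cast [Fin.val_succ, Fin.val_castSucc]
    ring

lemma encard_preimage (hf : IsOpenFold n f t) (hD : D.encard = d + 1) (h01 : {0, 1} ⊆ D) :
    (f ⁻¹' D).encard = n * d + 1 := by
  have h1 : (1 : unitInterval) ∈ f ⁻¹' D := hf.t_last ▸ h01 (hf.apply_mem_zero_one _)
  have hIio := hf.encard_Iio_inter_preimage hD h01 (Fin.last n)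
  rw [hf.t_last, Fin.val_last] at hIio
  rw [← encard_sdiff_singleton_add_one h1, ← hIio]
  congr 2
  ext x
  simp [lt_iff_le_and_ne, unitInterval.le_one', and_comm]

lemma encard_range (hf : IsOpenFold n f t) : (range t).encard = n + 1 := by
  rw [← image_univ, hf.strictMono.injective.encard_image, encard_univ,
    ENat.card_eq_coe_fintype_card, Fintype.card_fin]
  rfl

lemma zero_one_subset_range (hf : IsOpenFold n f t) : {0, 1} ⊆ range t := by
  rintro x (rfl | rfl)
  exacts [⟨0, hf.t_zero⟩, ⟨Fin.last n, hf.t_last⟩]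

lemma preimage_zero_one (hf : IsOpenFold n f t) : f ⁻¹' {0, 1} = range t := by
  have hcard := hf.encard_preimage unitInterval.encard_zero_one subset_rfl
  rw [Nat.cast_one, mul_one] at hcard
  refine (Finite.eq_of_subset_of_encard_le' (finite_of_encard_eq_coe hcard) ?_ ?_).symm
  · rintro _ ⟨k, rfl⟩
    exact hf.apply_mem_zero_one k
  · rw [hcard, hf.encard_range]

lemma encard_preimage_singleton (hf : IsOpenFold n f t) {y : unitInterval}
    (hy : y ∉ ({0, 1} : Set unitInterval)) : (f ⁻¹' {y}).encard = n := by
  have hD : ({y, 0, 1} : Set unitInterval).encard = (2 : ℕ) + 1 := by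
    rw [encard_insert_of_notMem hy, unitInterval.encard_zero_one]
    norm_num
  have hfiber : f ⁻¹' {y} = f ⁻¹' {y, 0, 1} \ f ⁻¹' {0, 1} := by
    rw [← preimage_sdiff, insert_sdiff_of_notMem _ hy, sdiff_self, insert_empty_eq]
  have hsum := encard_sdiff_add_encard_of_subset
    (preimage_mono (subset_insert y {0, 1}) : f ⁻¹' {0, 1} ⊆ f ⁻¹' {y, 0, 1})
  rw [← hfiber, hf.encard_preimage hD (subset_insert _ _),
    hf.encard_preimage unitInterval.encard_zero_one subset_rfl] at hsum
  have hfin : (f ⁻¹' {y}).encard ≠ ⊤ := fun h => by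
    rw [h, top_add] at hsum
    exact ENat.natCast_ne_top (n * 2 + 1) (by exact_mod_cast hsum.symm)
  lift (f ⁻¹' {y}).encard to ℕ using hfin with k
  norm_cast at hsum ⊢
  omega

lemma exists_injOn_mem_nhds (hf : IsOpenFold n f t) (hn : 0 < n) {e : unitInterval}
    (he : e ∈ ({0, 1} : Set unitInterval)) : ∃ K ∈ 𝓝 e, InjOn f K := by
  obtain ⟨n, rfl⟩ : ∃ k, n = k + 1 := ⟨n - 1, by omega⟩
  rcases he with rfl | rfl
  · have h0 : t (0 : Fin (n + 1)).castSucc = 0 := hf.t_zero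
    refine ⟨Iio (t (0 : Fin (n + 1)).succ),
      Iio_mem_nhds (h0 ▸ hf.strictMono (Fin.castSucc_lt_succ (i := 0))),
      (hf.bijOn 0).injOn.mono fun x hx => ?_⟩
    exact ⟨h0 ▸ unitInterval.nonneg', le_of_lt hx⟩
  · have h1 : t (Fin.last n).succ = 1 := hf.t_last
    refine ⟨Ioi (t (Fin.last n).castSucc),
      Ioi_mem_nhds (h1 ▸ hf.strictMono (Fin.castSucc_lt_succ (i := Fin.last n))),
      (hf.bijOn (Fin.last n)).injOn.mono fun x hx => ?_⟩
    exact ⟨le_of_lt hx, h1 ▸ unitInterval.le_one'⟩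

end

section

variable {n m : ℕ} {Fn Fm : unitInterval → unitInterval}
  {t : Fin (n + 1) → unitInterval} {s : Fin (m + 1) → unitInterval}

lemma lt_iff_of_commute (hFn : IsOpenFold n Fn t) (hFm : IsOpenFold m Fm s)
    (hcomm : ∀ x, Fm (Fn x) = Fn (Fm x)) (i : Fin (n + 1)) (j : Fin (m + 1)) :
    t i < s j ↔ (i : ℕ) * m < (j : ℕ) * n := by
  have hE : Fn ⁻¹' range s = Fm ⁻¹' range t := by
    ext x
    simp only [mem_preimage, ← hFn.preimage_zero_one, ← hFm.preimage_zero_one, hcomm]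
  have hti := hFn.encard_Iio_inter_preimage hFm.encard_range hFm.zero_one_subset_range i
  have hsj := hFm.encard_Iio_inter_preimage hFn.encard_range hFn.zero_one_subset_range j
  rw [← hE] at hsj
  have hmem : t i ∈ Fn ⁻¹' range s := hFm.zero_one_subset_range (hFn.apply_mem_zero_one i)
  rw [lt_iff_encard_Iio_inter_lt hmem (finite_of_encard_eq_coe (by exact_mod_cast hti)), hti, hsj]
  norm_cast

lemma ne_of_image_preimage_eq (hFn : IsOpenFold n Fn t) (hFm : IsOpenFold m Fm s)
    (hstrong : ∀ x, Fn '' (Fm ⁻¹' {x}) = Fm ⁻¹' {Fn x})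
    (i : Fin (n + 1)) {j : ℕ} (hj1 : 0 < j) (hj2 : j < m) : t i ≠ s ⟨j, by omega⟩ := by
  obtain ⟨j, rfl⟩ : ∃ k, j = k + 1 := ⟨j - 1, by omega⟩
  intro hc
  obtain ⟨K, hK, hKinj⟩ := hFm.exists_injOn_mem_nhds (by omega) (hFn.apply_mem_zero_one i)
  have hU : Fn ⁻¹' K ∈ 𝓝 (t i) := hFn.continuous.continuousAt.preimage_mem_nhds hK
  have hlap (k : ℕ) (hk : k < m) : s ⟨k, by omega⟩ < s ⟨k + 1, by omega⟩ ∧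
      InjOn Fm (Icc (s ⟨k, by omega⟩) (s ⟨k + 1, by omega⟩)) :=
    ⟨hFm.strictMono (Fin.castSucc_lt_succ (i := ⟨k, hk⟩)), (hFm.bijOn ⟨k, hk⟩).injOn⟩
  obtain ⟨hpc, hinjl⟩ := hc ▸ hlap j (by omega)
  obtain ⟨hcq, hinjr⟩ := hc ▸ hlap (j + 1) hj2
  obtain ⟨a, ⟨hpa, hac⟩, haU⟩ := exists_Ioc_subset_of_mem_nhds' hU hpc
  obtain ⟨b, ⟨hcb, hbq⟩, hbU⟩ := exists_Ico_subset_of_mem_nhds' hU hcq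
  have hfa : Fm a ≠ Fm (t i) := hinjl.ne ⟨hpa, hac.le⟩ ⟨hpc.le, le_rfl⟩ hac.ne
  have hfb : Fm b ≠ Fm (t i) := hinjr.ne ⟨hcb.le, hbq⟩ ⟨le_rfl, hcq.le⟩ hcb.ne'
  have hY := infinite_image_Ioo_inter_image_Ioo hac.le hcb.le hFm.continuous.continuousOn hfa hfb
    (unitInterval.isBot_or_isTop_of_mem_zero_one (hc ▸ hFm.apply_mem_zero_one _))
  obtain ⟨_, ⟨⟨a', ha', rfl⟩, ⟨b', hb', hb'a'⟩⟩, hy⟩ := (hY.sdiff (finite_range t)).nonempty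
  have hy01 : Fm a' ∉ ({0, 1} : Set unitInterval) := fun h => hy (hFn.zero_one_subset_range h)
  have hFny01 : Fn (Fm a') ∉ ({0, 1} : Set unitInterval) :=
    fun h => hy (hFn.preimage_zero_one ▸ h)
  -- `Fn` maps the fiber of `Fm` over `Fm a'` onto a fiber of the same size `m`.
  have hinj : InjOn Fn (Fm ⁻¹' {Fm a'}) := by
    refine injOn_of_ncard_image_eq ?_ (finite_of_encard_eq_coe
      (hFm.encard_preimage_singleton hy01))
    rw [hstrong, ncard_def, ncard_def, hFm.encard_preimage_singleton hy01,
      hFm.encard_preimage_singleton hFny01]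
  have hcomm := apply_comm_of_image_preimage_eq hstrong
  have hFnab : Fn a' = Fn b' :=
    hKinj (haU ⟨ha'.1, ha'.2.le⟩) (hbU ⟨hb'.1.le, hb'.2⟩) (by rw [hcomm, hcomm, hb'a'])
  exact (ha'.2.trans hb'.1).ne (hinj rfl hb'a' hFnab)

end

end IsOpenFold

/-- for strongly commuting open folding maps `Fn` (critical points
`t 1 < … < t (n-1)`) and `Fm` (critical points `s 1 < … < s (m-1)`) with
`n > m ≥ 2`, one has `t i < s j < t (i+1)` iff `i = ⌊n·j/m⌋`. -/
theorem stmt_7 (n m : ℕ)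
    (Fn Fm : unitInterval → unitInterval)
    (t : Fin (n + 1) → unitInterval) (s : Fin (m + 1) → unitInterval)
    (hFn : IsOpenFold n Fn t) (hFm : IsOpenFold m Fm s)
    (hstrong : ∀ x, Fn '' (Fm ⁻¹' {x}) = Fm ⁻¹' {Fn x}) :
    ∀ (i j : ℕ) (hi : i < n) (hj1 : 0 < j) (hj2 : j < m),
      (t ⟨i, by omega⟩ < s ⟨j, by omega⟩ ∧ s ⟨j, by omega⟩ < t ⟨i + 1, by omega⟩) ↔
        i = n * j / m := by
  intro i j hi hj1 hj2
  have hcomm := apply_comm_of_image_preimage_eq hstrong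
  have hts := hFn.lt_iff_of_commute hFm hcomm ⟨i, by omega⟩ ⟨j, by omega⟩
  have hst (k : ℕ) (hk : k < n + 1) :=
    hFm.lt_iff_of_commute hFn (fun x => (hcomm x).symm) ⟨j, by omega⟩ ⟨k, hk⟩
  have hne : i * m ≠ j * n := fun h => hFn.ne_of_image_preimage_eq hFm hstrong _ hj1 hj2 <|
    le_antisymm (not_lt.1 fun h' => ((hst i _).1 h').ne' h) (not_lt.1 fun h' => (hts.1 h').ne h)
  rw [hts, hst, eq_comm, Nat.div_eq_iff (by omega)]
  dsimp only
  rw [Nat.mul_comm n j, add_one_mul]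
  omega
end

section
/- Let A be a monotone arc of a relation Γ ⊆ I×I and B a monotone arc of a relation Δ ⊆ I×I, with π_1(A) = [x_1,x_2], π_2(A) = [y_1,y_2] = π_1(B), and π_2(B) = [z_1,z_2]. Then there exists a monotone arc C ⊆ Δ ∘ Γ with π_1(C) = [x_1,x_2] and π_2(C) = [z_1,z_2]. -/
open Filter Set

private theorem stmt_9_aux (Γ Δ A B : Set (unitInterval × unitInterval))
    (hAΓ : A ⊆ Γ) (hBΔ : B ⊆ Δ)
    (hA : IsCompact A ∧ IsConnected A ∧ Set.InjOn Prod.fst A ∧ Set.InjOn Prod.snd A)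
    (hB : IsCompact B ∧ IsConnected B ∧ Set.InjOn Prod.fst B ∧ Set.InjOn Prod.snd B)
    (x₁ x₂ y₁ y₂ z₁ z₂ : unitInterval)
    (hA1 : Prod.fst '' A = Set.Icc x₁ x₂) (hA2 : Prod.snd '' A = Set.Icc y₁ y₂)
    (hB1 : Prod.fst '' B = Set.Icc y₁ y₂) (hB2 : Prod.snd '' B = Set.Icc z₁ z₂) :
    ∃ C : Set (unitInterval × unitInterval), C ⊆ {p | ∃ y, (p.1, y) ∈ Γ ∧ (y, p.2) ∈ Δ} ∧
      (IsCompact C ∧ IsConnected C ∧ Set.InjOn Prod.fst C ∧ Set.InjOn Prod.snd C) ∧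
      Prod.fst '' C = Set.Icc x₁ x₂ ∧ Prod.snd '' C = Set.Icc z₁ z₂ := by
  haveI : CompactSpace ↥A := isCompact_iff_compactSpace.mp hA.1
  haveI : CompactSpace ↥B := isCompact_iff_compactSpace.mp hB.1
  have heAmem : ∀ p : ↥A, (p : unitInterval × unitInterval).2 ∈ Set.Icc y₁ y₂ := by
    intro p; rw [← hA2]; exact ⟨p, p.2, rfl⟩
  have heBmem : ∀ p : ↥B, (p : unitInterval × unitInterval).1 ∈ Set.Icc y₁ y₂ := by
    intro p; rw [← hB1]; exact ⟨p, p.2, rfl⟩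
  set eA : ↥A → ↥(Set.Icc y₁ y₂) := fun p => ⟨(p : unitInterval × unitInterval).2, heAmem p⟩
    with heq_eA
  set eB : ↥B → ↥(Set.Icc y₁ y₂) := fun p => ⟨(p : unitInterval × unitInterval).1, heBmem p⟩
    with heq_eB
  have hcA : Continuous eA := Continuous.subtype_mk (continuous_snd.comp continuous_subtype_val) _
  have hcB : Continuous eB := Continuous.subtype_mk (continuous_fst.comp continuous_subtype_val) _
  have hbA : Function.Bijective eA := by
    constructor
    · intro p q h
      exact Subtype.ext (hA.2.2.2 p.2 q.2 (congrArg Subtype.val h))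
    · intro q
      obtain ⟨p, hp, hpq⟩ : q.val ∈ Prod.snd '' A := by rw [hA2]; exact q.2
      exact ⟨⟨p, hp⟩, Subtype.ext hpq⟩
  have hbB : Function.Bijective eB := by
    constructor
    · intro p q h
      exact Subtype.ext (hB.2.2.1 p.2 q.2 (congrArg Subtype.val h))
    · intro q
      obtain ⟨p, hp, hpq⟩ : q.val ∈ Prod.fst '' B := by rw [hB1]; exact q.2
      exact ⟨⟨p, hp⟩, Subtype.ext hpq⟩
  set homA : ↥A ≃ₜ ↥(Set.Icc y₁ y₂) :=
    Continuous.homeoOfEquivCompactToT2 (f := Equiv.ofBijective eA hbA) hcA with heq_homA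
  set homB : ↥B ≃ₜ ↥(Set.Icc y₁ y₂) :=
    Continuous.homeoOfEquivCompactToT2 (f := Equiv.ofBijective eB hbB) hcB with heq_homB
  have haval : ∀ y : ↥(Set.Icc y₁ y₂), ((homA.symm y : unitInterval × unitInterval)) ∈ A :=
    fun y => (homA.symm y).2
  have hbval : ∀ y : ↥(Set.Icc y₁ y₂), ((homB.symm y : unitInterval × unitInterval)) ∈ B :=
    fun y => (homB.symm y).2
  have ha2 : ∀ y : ↥(Set.Icc y₁ y₂),
      (homA.symm y : unitInterval × unitInterval).2 = (y : unitInterval) :=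
    fun y => congrArg Subtype.val (homA.apply_symm_apply y)
  have hb1 : ∀ y : ↥(Set.Icc y₁ y₂),
      (homB.symm y : unitInterval × unitInterval).1 = (y : unitInterval) :=
    fun y => congrArg Subtype.val (homB.apply_symm_apply y)
  set g : ↥(Set.Icc y₁ y₂) → unitInterval × unitInterval :=
    fun y => ((homA.symm y : unitInterval × unitInterval).1,
              (homB.symm y : unitInterval × unitInterval).2) with heq_g
  have hgc : Continuous g :=
    Continuous.prodMk
      (continuous_fst.comp (continuous_subtype_val.comp homA.symm.continuous))
      (continuous_snd.comp (continuous_subtype_val.comp homB.symm.continuous))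
  haveI : CompactSpace ↥(Set.Icc y₁ y₂) :=
    isCompact_iff_compactSpace.mp (IsClosed.isCompact isClosed_Icc)
  haveI : PreconnectedSpace ↥(Set.Icc y₁ y₂) := by
    apply Subtype.preconnectedSpace
    apply (Topology.IsInducing.subtypeVal (t := unitInterval)).isPreconnected_image.mp
    have himg : Subtype.val '' (Set.Icc y₁ y₂) = Set.Icc (y₁ : ℝ) (y₂ : ℝ) := by
      ext x
      constructor
      · rintro ⟨u, hu, rfl⟩
        exact ⟨Subtype.coe_le_coe.mpr hu.1, Subtype.coe_le_coe.mpr hu.2⟩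
      · intro hx
        exact ⟨⟨x, le_trans y₁.2.1 hx.1, le_trans hx.2 y₂.2.2⟩,
          ⟨Subtype.coe_le_coe.mp hx.1, Subtype.coe_le_coe.mp hx.2⟩, rfl⟩
    rw [himg]
    exact isPreconnected_Icc
  have hy12 : y₁ ≤ y₂ := by
    obtain ⟨p, hp⟩ := hA.2.1.nonempty
    have : p.2 ∈ Set.Icc y₁ y₂ := by rw [← hA2]; exact ⟨p, hp, rfl⟩
    exact le_trans this.1 this.2
  haveI : Nonempty ↥(Set.Icc y₁ y₂) := ⟨⟨y₁, le_refl _, hy12⟩⟩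
  refine ⟨Set.range g, ?_, ⟨isCompact_range hgc, ?_, ?_, ?_⟩, ?_, ?_⟩
  · rintro c ⟨y, rfl⟩
    refine ⟨(y : unitInterval), hAΓ ?_, hBΔ ?_⟩
    · have h1 : ((homA.symm y : unitInterval × unitInterval).1, (y : unitInterval)) ∈ A := by
        rw [← ha2 y]; exact haval y
      exact h1
    · have h2 : ((y : unitInterval), (homB.symm y : unitInterval × unitInterval).2) ∈ B := by
        rw [← hb1 y]; exact hbval y
      exact h2
  · exact ⟨⟨g ⟨y₁, le_refl _, hy12⟩, Set.mem_range_self _⟩, isPreconnected_range hgc⟩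
  · rintro c ⟨y, rfl⟩ c' ⟨y', rfl⟩ h
    have h1 : homA.symm y = homA.symm y' := Subtype.ext (hA.2.2.1 (haval y) (haval y') h)
    have h2 : y = y' := homA.symm.injective h1
    rw [h2]
  · rintro c ⟨y, rfl⟩ c' ⟨y', rfl⟩ h
    have h1 : homB.symm y = homB.symm y' := Subtype.ext (hB.2.2.2 (hbval y) (hbval y') h)
    have h2 : y = y' := homB.symm.injective h1
    rw [h2]
  · ext x
    constructor
    · rintro ⟨_, ⟨y, rfl⟩, rfl⟩
      rw [← hA1]
      exact ⟨_, haval y, rfl⟩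
    · intro hx
      rw [← hA1] at hx
      obtain ⟨p, hp, rfl⟩ := hx
      refine ⟨g (homA ⟨p, hp⟩), Set.mem_range_self _, ?_⟩
      show (homA.symm (homA ⟨p, hp⟩) : unitInterval × unitInterval).1 = p.1
      rw [homA.symm_apply_apply]
  · ext z
    constructor
    · rintro ⟨_, ⟨y, rfl⟩, rfl⟩
      rw [← hB2]
      exact ⟨_, hbval y, rfl⟩
    · intro hz
      rw [← hB2] at hz
      obtain ⟨p, hp, rfl⟩ := hz
      refine ⟨g (homB ⟨p, hp⟩), Set.mem_range_self _, ?_⟩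
      show (homB.symm (homB ⟨p, hp⟩) : unitInterval × unitInterval).2 = p.2
      rw [homB.symm_apply_apply]

/-- if `A ⊆ Γ` and `B ⊆ Δ` are monotone arcs with
`π₁(A) = [x₁,x₂]`, `π₂(A) = [y₁,y₂] = π₁(B)`, `π₂(B) = [z₁,z₂]`, then there is a
monotone arc `C ⊆ Δ ∘ Γ` with `π₁(C) = [x₁,x₂]` and `π₂(C) = [z₁,z₂]`. -/
theorem stmt_9 (Γ Δ A B : Set (unitInterval × unitInterval))
    (hAΓ : A ⊆ Γ) (hBΔ : B ⊆ Δ)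
    (hA : IsMonotoneArc A) (hB : IsMonotoneArc B)
    (x₁ x₂ y₁ y₂ z₁ z₂ : unitInterval)
    (hA1 : Prod.fst '' A = Set.Icc x₁ x₂) (hA2 : Prod.snd '' A = Set.Icc y₁ y₂)
    (hB1 : Prod.fst '' B = Set.Icc y₁ y₂) (hB2 : Prod.snd '' B = Set.Icc z₁ z₂) :
    ∃ C : Set (unitInterval × unitInterval), C ⊆ relComp Γ Δ ∧ IsMonotoneArc C ∧
      Prod.fst '' C = Set.Icc x₁ x₂ ∧ Prod.snd '' C = Set.Icc z₁ z₂ := by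
  obtain ⟨C, h1, h2, h3, h4⟩ :=
    stmt_9_aux Γ Δ A B hAΓ hBΔ hA hB x₁ x₂ y₁ y₂ z₁ z₂ hA1 hA2 hB1 hB2
  exact ⟨C, h1, h2, h3, h4⟩
end

section
/- Let 𝒰 be a finite cover of [0,1] by open intervals with pairwise distinct endpoints, let [a_1,b_1], …, [a_k,b_k] be subintervals of [0,1] and h_i : [a_i,b_i] → [a_{i+1},b_{i+1}] homeomorphisms for 1 ≤ i ≤ k−1. Writing h^i_{k-1} = h_{k-1} ∘ … ∘ h_{i+1} (with h^{k-1}_{k-1} = id), any minimal-cardinality subcover ℬ of ⋁_{i=0}^{k-1} h^i_{k-1}(𝒰) covering [a_k,b_k] satisfies |ℬ| ≤ k²·|𝒰|². -/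
open Filter Set

/-!
Each element of `ℬ` is cut out by a `k`-tuple of members of `𝒰`, so `|ℬ| ≤ |𝒰|^k`; this settles
`k ≤ 2` and `|𝒰| ≤ 1`. Otherwise, every element of `ℬ` is an interval (an intersection of
homeomorphic images of intervals) whose supremum is the supremum of one of the intersected
intervals, hence is `a_k`, `b_k` or `h^i_{k-1}` of an endpoint of a member of `𝒰`: at most
`2 + 2k|𝒰|` values. By minimality every element of `ℬ` has a point lying in no other element,
and for intervals this forces two elements with the same supremum to differ in whether they
contain it. Hence `|ℬ| ≤ 4(k|𝒰| + 1) ≤ k²|𝒰|²`.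
-/

theorem Finset.card_le_card_pow_of_forall_exists_eq {β γ : Type*} (ℬ : Finset β) (𝒰 : Finset γ)
    (k : ℕ) (F : (ℕ → γ) → β) (hF : ∀ u v : ℕ → γ, (∀ i < k, u i = v i) → F u = F v)
    (h : ∀ B ∈ ℬ, ∃ u : ℕ → γ, (∀ i < k, u i ∈ 𝒰) ∧ B = F u) :
    ℬ.card ≤ 𝒰.card ^ k := by
  choose u hu hBu using h
  let code : ℬ → Fin k → 𝒰 := fun B i => ⟨u B B.2 i, hu B B.2 i i.2⟩
  have hcode : Function.Injective code := fun B C hBC => Subtype.ext <| by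
    rw [hBu B B.2, hBu C C.2]
    exact hF _ _ fun i hi => congrArg Subtype.val (congrFun hBC ⟨i, hi⟩)
  simpa using Fintype.card_le_of_injective code hcode

theorem exists_mem_forall_notMem_of_minimal_cover {X : Type*} {s : Set X} {ℬ : Finset (Set X)}
    (hcov : s ⊆ ⋃ B ∈ ℬ, B) (hmin : ∀ ℬ' ⊆ ℬ, s ⊆ ⋃ B ∈ ℬ', B → ℬ' = ℬ)
    {B : Set X} (hB : B ∈ ℬ) : ∃ x ∈ B, ∀ C ∈ ℬ, C ≠ B → x ∉ C := by
  classical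
  by_contra! hshared
  have hcov' : s ⊆ ⋃ C ∈ ℬ.erase B, C := fun x hx => by
    obtain ⟨C, hC, hxC⟩ := mem_iUnion₂.1 (hcov hx)
    by_cases hCB : C = B
    · obtain ⟨C', hC', hC'B, hxC'⟩ := hshared x (hCB ▸ hxC)
      exact mem_iUnion₂.2 ⟨C', Finset.mem_erase.2 ⟨hC'B, hC'⟩, hxC'⟩
    · exact mem_iUnion₂.2 ⟨C, Finset.mem_erase.2 ⟨hCB, hC⟩, hxC⟩
  exact Finset.notMem_erase B ℬ ((hmin _ (Finset.erase_subset B ℬ) hcov').symm ▸ hB)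

theorem Set.OrdConnected.forall_lt_of_notMem {α : Type*} [LinearOrder α] {B : Set α}
    (hB : B.OrdConnected) {x y : α}
    (hx : x ∈ B) (hy : y ∉ B) (hxy : x < y) : ∀ z ∈ B, z < y := fun _ hz =>
  lt_of_not_ge fun hyz => hy (hB.out hx hz ⟨hxy.le, hyz⟩)

section OrderedSets

variable {α : Type*} [ConditionallyCompleteLinearOrder α]

theorem injOn_csSup_mem_of_ordConnected {ℬ : Set (Set α)} (hne : ∀ B ∈ ℬ, B.Nonempty)
    (hbdd : ∀ B ∈ ℬ, BddAbove B) (hoc : ∀ B ∈ ℬ, B.OrdConnected)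
    (hpriv : ∀ B ∈ ℬ, ∃ x ∈ B, ∀ C ∈ ℬ, C ≠ B → x ∉ C) :
    InjOn (fun B => (sSup B, sSup B ∈ B)) ℬ := by
  intro B hB C hC hBC
  obtain ⟨hsup, hmem⟩ := Prod.mk.inj hBC
  clear hBC
  by_contra hBC'
  obtain ⟨x, hxB, hx⟩ := hpriv B hB
  obtain ⟨y, hyC, hy⟩ := hpriv C hC
  wlog hxy : x < y generalizing B C x y
  · have hyx : y ≠ x := fun h => hx C hC (Ne.symm hBC') (h ▸ hyC)
    exact this hC hB hsup.symm hmem.symm (Ne.symm hBC') y hyC hy x hxB hx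
      (lt_of_le_of_ne (not_lt.1 hxy) hyx)
  -- `B` lies strictly below `y ∈ C`, so `sSup C = sSup B ≤ y` pins `y` down as `sSup C`.
  have hlt := (hoc B hB).forall_lt_of_notMem hxB (hy B hB hBC') hxy
  have hy_eq : y = sSup C := le_antisymm (le_csSup (hbdd C hC) hyC)
    (hsup ▸ csSup_le (hne B hB) fun z hz => (hlt z hz).le)
  have hsupB : sSup B ∈ B := hmem ▸ hy_eq ▸ hyC
  exact (hlt _ hsupB).ne (hsup.trans hy_eq.symm)

theorem Finset.card_le_two_mul_card_of_csSup_mem {ℬ : Finset (Set α)} {E : Finset α}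
    (hne : ∀ B ∈ ℬ, B.Nonempty) (hbdd : ∀ B ∈ ℬ, BddAbove B) (hoc : ∀ B ∈ ℬ, B.OrdConnected)
    (hpriv : ∀ B ∈ ℬ, ∃ x ∈ B, ∀ C ∈ ℬ, C ≠ B → x ∉ C) (hE : ∀ B ∈ ℬ, sSup B ∈ E) :
    ℬ.card ≤ 2 * E.card := by
  classical
  have hinj := injOn_csSup_mem_of_ordConnected hne hbdd hoc hpriv
  calc ℬ.card ≤ (E ×ˢ (Finset.univ : Finset Bool)).card :=
        Finset.card_le_card_of_injOn (fun B => (sSup B, decide (sSup B ∈ B)))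
          (fun B hB => Finset.mem_product.2 ⟨hE B hB, Finset.mem_univ _⟩)
          (fun B hB C hC hBC => hinj hB hC (by simpa using hBC))
    _ = 2 * E.card := by simp [mul_comm]

theorem exists_csSup_biInter_eq {ι : Type*} {s : Finset ι} (hs : s.Nonempty) {J : ι → Set α}
    (hoc : ∀ i ∈ s, (J i).OrdConnected) (hbdd : ∀ i ∈ s, BddAbove (J i))
    (hne : (⋂ i ∈ s, J i).Nonempty) : ∃ i ∈ s, sSup (⋂ i ∈ s, J i) = sSup (J i) := by
  obtain ⟨x, hx⟩ := hne
  have hxJ : ∀ i ∈ s, x ∈ J i := mem_iInter₂.1 hx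
  by_contra! hsup
  -- Otherwise each `J i` has a point `z i` above `sSup (⋂ J)`; the least one lies in every `J i`.
  have hbig : ∀ i ∈ s, ∃ z ∈ J i, sSup (⋂ i ∈ s, J i) < z := fun i hi =>
    exists_lt_of_lt_csSup ⟨x, hxJ i hi⟩ <|
      (csSup_le_csSup (hbdd i hi) ⟨x, hx⟩ (biInter_subset_of_mem hi)).lt_of_ne (hsup i hi)
  have : Nonempty α := ⟨x⟩
  choose! z hzJ hz using hbig
  obtain ⟨i₀, hi₀, hmin⟩ := s.exists_min_image z hs
  have hbddB : BddAbove (⋂ i ∈ s, J i) := (hbdd i₀ hi₀).mono (biInter_subset_of_mem hi₀)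
  have hxz : x ≤ z i₀ := (le_csSup hbddB hx).trans (hz i₀ hi₀).le
  have hzB : z i₀ ∈ ⋂ i ∈ s, J i :=
    mem_iInter₂.2 fun i hi => (hoc i hi).out (hxJ i hi) (hzJ i hi) ⟨hxz, hmin i hi⟩
  exact (hz i₀ hi₀).not_ge (le_csSup hbddB hzB)

theorem csSup_Ioo_inter_Icc [DenselyOrdered α] {a b c d : α}
    (hne : (Ioo a b ∩ Icc c d).Nonempty) : sSup (Ioo a b ∩ Icc c d) = min b d := by
  have hbdd : BddAbove (Ioo a b ∩ Icc c d) := ⟨d, fun _ hy => hy.2.2⟩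
  refine le_antisymm (csSup_le hne fun y hy => le_min hy.1.2.le hy.2.2) (le_of_not_gt fun hlt => ?_)
  obtain ⟨x, hx⟩ := hne
  obtain ⟨y, hsy, hy⟩ := exists_between hlt
  rw [lt_min_iff] at hy
  have hxy : x ≤ y := (le_csSup hbdd hx).trans hsy.le
  exact hsy.not_ge (le_csSup hbdd ⟨⟨hx.1.1.trans_le hxy, hy.1⟩, hx.2.1.trans hxy, hy.2.le⟩)

theorem csInf_Ioo_inter_Icc [DenselyOrdered α] {a b c d : α}
    (hne : (Ioo a b ∩ Icc c d).Nonempty) : sInf (Ioo a b ∩ Icc c d) = max a c := by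
  have hbdd : BddBelow (Ioo a b ∩ Icc c d) := ⟨c, fun _ hy => hy.2.1⟩
  refine le_antisymm (le_of_not_gt fun hlt => ?_) (le_csInf hne fun y hy => max_le hy.1.1.le hy.2.1)
  obtain ⟨x, hx⟩ := hne
  obtain ⟨y, hy, hys⟩ := exists_between hlt
  rw [max_lt_iff] at hy
  have hyx : y ≤ x := hys.le.trans (csInf_le hbdd hx)
  exact hys.not_ge (csInf_le hbdd ⟨⟨hy.1, hyx.trans_lt hx.1.2⟩, hy.2.le, hyx.trans hx.2.2⟩)

end OrderedSets

theorem continuousOn_and_bijOn_of_comp_chain {X : Type*} [TopologicalSpace X] {S : ℕ → Set X}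
    {k : ℕ} {h G : ℕ → X → X}
    (hhc : ∀ i, 1 ≤ i → i ≤ k - 1 → ContinuousOn (h i) (S i))
    (hhb : ∀ i, 1 ≤ i → i ≤ k - 1 → BijOn (h i) (S i) (S (i + 1)))
    (hGtop : G (k - 1) = id) (hGrec : ∀ i, i < k - 1 → ∀ x, G i x = G (i + 1) (h (i + 1) x))
    {i : ℕ} (hi : i < k) : ContinuousOn (G i) (S (i + 1)) ∧ BijOn (G i) (S (i + 1)) (S k) := by
  have hk : 1 ≤ k := by omega
  have hik : i ≤ k - 1 := by omega
  clear hi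
  induction hik using Nat.decreasingInduction with
  | self =>
    rw [hGtop, Nat.sub_add_cancel hk]
    exact ⟨continuousOn_id, bijOn_id _⟩
  | of_succ j hj ih =>
    obtain ⟨hc, hb⟩ := ih
    have hGj : EqOn (G (j + 1) ∘ h (j + 1)) (G j) (S (j + 1)) := fun x _ => (hGrec j hj x).symm
    have hhb' := hhb (j + 1) (by omega) (by omega)
    exact ⟨(hc.comp (hhc (j + 1) (by omega) (by omega)) hhb'.mapsTo).congr hGj.symm,
      (hb.comp hhb').congr hGj⟩

theorem csSup_image_Ioo_inter_Icc_mem {g : ℝ → ℝ} {p q α β c d : ℝ}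
    (hg : ContinuousOn g (Icc α β)) (hb : BijOn g (Icc α β) (Icc c d))
    (hne : (Ioo p q ∩ Icc α β).Nonempty) :
    sSup (g '' (Ioo p q ∩ Icc α β)) ∈ ({c, d, g p, g q} : Set ℝ) := by
  obtain ⟨x, hpx, hαx, hxβ⟩ := id hne
  have hαβ : α ≤ β := hαx.trans hxβ
  have hcd : c ≤ d := (hb.mapsTo (left_mem_Icc.2 hαβ)).1.trans (hb.mapsTo (left_mem_Icc.2 hαβ)).2
  have hmax : IsGreatest (g '' Icc α β) d := hb.image_eq ▸ isGreatest_Icc hcd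
  have hS : Ioo p q ∩ Icc α β ⊆ Icc α β := inter_subset_right
  have hcont : ∀ y ∈ Icc α β, ContinuousWithinAt g (Ioo p q ∩ Icc α β) y :=
    fun y hy => (hg y hy).mono hS
  rcases hg.strictMonoOn_of_injOn_Icc' hαβ hb.injOn with hmono | hanti
  · have hsup : sSup (Ioo p q ∩ Icc α β) ∈ Icc α β := by
      rw [csSup_Ioo_inter_Icc hne]
      exact ⟨le_min (hαx.trans hpx.2.le) hαβ, min_le_right q β⟩
    rw [← (hmono.monotoneOn.mono hS).map_csSup_of_continuousWithinAt (hcont _ hsup) hne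
      ⟨β, fun _ hy => hy.2.2⟩,
      csSup_Ioo_inter_Icc hne]
    rcases min_choice q β with h | h <;> rw [h]
    · simp
    · simp [(hmono.monotoneOn.map_isGreatest (isGreatest_Icc hαβ)).unique hmax]
  · have hinf : sInf (Ioo p q ∩ Icc α β) ∈ Icc α β := by
      rw [csInf_Ioo_inter_Icc hne]
      exact ⟨le_max_right p α, max_le (hpx.1.le.trans hxβ) hαβ⟩
    rw [← (hanti.antitoneOn.mono hS).map_csInf_of_continuousWithinAt (hcont _ hinf) hne
      ⟨α, fun _ hy => hy.2.1⟩,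
      csInf_Ioo_inter_Icc hne]
    rcases max_choice p α with h | h <;> rw [h]
    · simp
    · simp [(hanti.antitoneOn.map_isLeast (isLeast_Icc hαβ)).unique hmax]

noncomputable def endpointImages (c d : ℝ) (k : ℕ) (𝒰 : Finset (Set ℝ)) (G : ℕ → ℝ → ℝ) :
    Finset ℝ :=
  insert c <| insert d <|
    (Finset.range k ×ˢ 𝒰).biUnion fun iU => {G iU.1 (sInf iU.2), G iU.1 (sSup iU.2)}

theorem card_endpointImages_le (c d : ℝ) (k : ℕ) (𝒰 : Finset (Set ℝ)) (G : ℕ → ℝ → ℝ) :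
    (endpointImages c d k 𝒰 G).card ≤ 2 * (k * 𝒰.card + 1) := by
  have hpairs := Finset.card_biUnion_le_card_mul (Finset.range k ×ˢ 𝒰)
    (fun iU => ({G iU.1 (sInf iU.2), G iU.1 (sSup iU.2)} : Finset ℝ)) 2
    fun _ _ => Finset.card_le_two
  rw [Finset.card_product, Finset.card_range] at hpairs
  unfold endpointImages
  grw [Finset.card_insert_le, Finset.card_insert_le, hpairs]
  linarith

theorem subset_endpointImages {c d : ℝ} {k : ℕ} {𝒰 : Finset (Set ℝ)} {G : ℕ → ℝ → ℝ} {i : ℕ}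
    (hi : i < k) {U : Set ℝ} (hU : U ∈ 𝒰) :
    ({c, d, G i (sInf U), G i (sSup U)} : Set ℝ) ⊆ endpointImages c d k 𝒰 G := by
  rintro x (rfl | rfl | rfl | rfl)
  · exact Finset.mem_insert_self _ _
  · exact Finset.mem_insert_of_mem (Finset.mem_insert_self _ _)
  all_goals exact Finset.mem_insert_of_mem <| Finset.mem_insert_of_mem <|
    Finset.mem_biUnion.2 ⟨(i, U), Finset.mem_product.2 ⟨Finset.mem_range.2 hi, hU⟩, by simp⟩

theorem bddAbove_ordConnected_csSup_mem_of_eq_biInter {k : ℕ} (hk : 1 ≤ k) {𝒰 : Finset (Set ℝ)}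
    (hUopen : ∀ U ∈ 𝒰, ∃ p q : ℝ, p < q ∧ U = Ioo p q) {G : ℕ → ℝ → ℝ} {a b : ℕ → ℝ} {c d : ℝ}
    (hG : ∀ i < k, ContinuousOn (G i) (Icc (a i) (b i)) ∧ BijOn (G i) (Icc (a i) (b i)) (Icc c d))
    {u : ℕ → Set ℝ} (hu : ∀ i < k, u i ∈ 𝒰) {B : Set ℝ}
    (hB : B = ⋂ i ∈ Finset.range k, G i '' (u i ∩ Icc (a i) (b i))) (hne : B.Nonempty) :
    BddAbove B ∧ B.OrdConnected ∧ sSup B ∈ endpointImages c d k 𝒰 G := by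
  have hJ : ∀ i ∈ Finset.range k, (G i '' (u i ∩ Icc (a i) (b i))).OrdConnected ∧
      BddAbove (G i '' (u i ∩ Icc (a i) (b i))) := by
    intro i hi
    obtain ⟨hc, hb⟩ := hG i (Finset.mem_range.1 hi)
    obtain ⟨p, q, -, hU⟩ := hUopen _ (hu i (Finset.mem_range.1 hi))
    rw [hU]
    exact ⟨((ordConnected_Ioo.inter ordConnected_Icc).isPreconnected.image _
        (hc.mono inter_subset_right)).ordConnected,
      bddAbove_Icc.mono ((image_mono inter_subset_right).trans hb.mapsTo.image_subset)⟩
  have h0 : 0 ∈ Finset.range k := Finset.mem_range.2 hk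
  subst hB
  refine ⟨(hJ 0 h0).2.mono (biInter_subset_of_mem h0),
    ordConnected_biInter fun i hi => (hJ i hi).1, ?_⟩
  obtain ⟨i, hi, hsup⟩ := exists_csSup_biInter_eq ⟨0, h0⟩ (fun i hi => (hJ i hi).1)
    (fun i hi => (hJ i hi).2) hne
  have hik := Finset.mem_range.1 hi
  obtain ⟨p, q, hpq, hU⟩ := hUopen _ (hu i hik)
  have hTne : (Ioo p q ∩ Icc (a i) (b i)).Nonempty := by
    obtain ⟨x, hx⟩ := hne
    obtain ⟨y, hy, -⟩ := mem_iInter₂.1 hx i hi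
    exact ⟨y, hU ▸ hy⟩
  have hends := subset_endpointImages (c := c) (d := d) (G := G) hik (hu i hik)
  rw [hU, csInf_Ioo hpq, csSup_Ioo hpq] at hends
  rw [hsup, hU]
  exact hends (csSup_image_Ioo_inter_Icc_mem (hG i hik).1 (hG i hik).2 hTne)

theorem le_sq_mul_sq_of_le_pow {m n k : ℕ} (hk : 1 ≤ k) (hpow : m ≤ n ^ k)
    (hlin : m ≤ 4 * (k * n + 1)) : m ≤ k ^ 2 * n ^ 2 := by
  rcases le_or_gt k 2 with hk2 | hk3
  · interval_cases k <;> nlinarith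
  rcases le_or_gt n 1 with hn1 | hn2
  · interval_cases n
    · simpa [zero_pow (by omega : k ≠ 0)] using hpow
    · simpa using hpow.trans (by simp; nlinarith)
  · have h6 : 6 ≤ k * n := by nlinarith
    nlinarith

theorem stmt_10_general (k : ℕ) (hk : 1 ≤ k)
    (𝒰 : Finset (Set ℝ))
    (hUopen : ∀ U ∈ 𝒰, ∃ p q : ℝ, p < q ∧ U = Set.Ioo p q)
    (a b : ℕ → ℝ)
    (h : ℕ → ℝ → ℝ)
    (hhc : ∀ i, 1 ≤ i → i ≤ k - 1 → ContinuousOn (h i) (Set.Icc (a i) (b i)))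
    (hhb : ∀ i, 1 ≤ i → i ≤ k - 1 →
      Set.BijOn (h i) (Set.Icc (a i) (b i)) (Set.Icc (a (i + 1)) (b (i + 1))))
    (G : ℕ → ℝ → ℝ) (hGtop : G (k - 1) = id)
    (hGrec : ∀ i, i < k - 1 → ∀ x, G i x = G (i + 1) (h (i + 1) x))
    (ℬ : Finset (Set ℝ))
    (hBmem : ∀ B ∈ ℬ, B.Nonempty ∧ ∃ u : ℕ → Set ℝ, (∀ i < k, u i ∈ 𝒰) ∧
      B = ⋂ i ∈ Finset.range k, G i '' (u i ∩ Set.Icc (a (i + 1)) (b (i + 1))))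
    (hBcover : Set.Icc (a k) (b k) ⊆ ⋃ B ∈ ℬ, B)
    (hBmin : ∀ ℬ' : Finset (Set ℝ),
      (∀ B ∈ ℬ', B.Nonempty ∧ ∃ u : ℕ → Set ℝ, (∀ i < k, u i ∈ 𝒰) ∧
        B = ⋂ i ∈ Finset.range k, G i '' (u i ∩ Set.Icc (a (i + 1)) (b (i + 1)))) →
      Set.Icc (a k) (b k) ⊆ (⋃ B ∈ ℬ', B) → ℬ.card ≤ ℬ'.card) :
    ℬ.card ≤ k ^ 2 * 𝒰.card ^ 2 := by
  classical
  have hG : ∀ i < k, ContinuousOn (G i) (Icc (a (i + 1)) (b (i + 1))) ∧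
      BijOn (G i) (Icc (a (i + 1)) (b (i + 1))) (Icc (a k) (b k)) := fun i hi =>
    continuousOn_and_bijOn_of_comp_chain (S := fun i => Icc (a i) (b i)) hhc hhb hGtop hGrec hi
  have hpiece : ∀ B ∈ ℬ, B.Nonempty ∧ BddAbove B ∧ B.OrdConnected ∧
      sSup B ∈ endpointImages (a k) (b k) k 𝒰 G := by
    intro B hB
    obtain ⟨hne, u, hu, hBu⟩ := hBmem B hB
    exact ⟨hne, bddAbove_ordConnected_csSup_mem_of_eq_biInter hk hUopen hG hu hBu hne⟩
  choose hne hbdd hoc hE using hpiece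
  have hpriv : ∀ B ∈ ℬ, ∃ x ∈ B, ∀ C ∈ ℬ, C ≠ B → x ∉ C := fun B hB =>
    exists_mem_forall_notMem_of_minimal_cover hBcover (fun ℬ' hsub hcov =>
      Finset.eq_of_subset_of_card_le hsub (hBmin ℬ' (fun B hB => hBmem B (hsub hB)) hcov)) hB
  have hpow : ℬ.card ≤ 𝒰.card ^ k :=
    Finset.card_le_card_pow_of_forall_exists_eq ℬ 𝒰 k
      (fun u => ⋂ i ∈ Finset.range k, G i '' (u i ∩ Icc (a (i + 1)) (b (i + 1))))
      (fun u v huv => iInter₂_congr fun i hi => by rw [huv i (Finset.mem_range.1 hi)])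
      (fun B hB => (hBmem B hB).2)
  have hlin : ℬ.card ≤ 4 * (k * 𝒰.card + 1) := by
    have := Finset.card_le_two_mul_card_of_csSup_mem hne hbdd hoc hpriv hE
    have := card_endpointImages_le (a k) (b k) k 𝒰 G
    omega
  exact le_sq_mul_sq_of_le_pow hk hpow hlin

/-- given a finite cover `𝒰` of `[0,1]` by open intervals with
pairwise distinct endpoints, a chain of homeomorphisms
`h i : [a i, b i] → [a (i+1), b (i+1)]` for `1 ≤ i ≤ k-1`, and the compositions
`G i = h (k-1) ∘ … ∘ h (i+1)`, any minimal-cardinality subcover `ℬ` of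
`⋁_{i<k} G i (𝒰)` covering `[a k, b k]` satisfies `|ℬ| ≤ k² · |𝒰|²`. -/
theorem stmt_10 (k : ℕ) (hk : 1 ≤ k)
    (𝒰 : Finset (Set ℝ))
    (hUopen : ∀ U ∈ 𝒰, ∃ p q : ℝ, p < q ∧ U = Set.Ioo p q)
    (hUdist : ∀ U ∈ 𝒰, ∀ V ∈ 𝒰, U ≠ V → ∀ p q r s : ℝ, p < q → r < s →
      U = Set.Ioo p q → V = Set.Ioo r s → p ≠ r ∧ p ≠ s ∧ q ≠ r ∧ q ≠ s)
    (hUcover : Set.Icc (0 : ℝ) 1 ⊆ ⋃ U ∈ 𝒰, U)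
    (a b : ℕ → ℝ) (hab : ∀ i, 1 ≤ i → i ≤ k → a i ≤ b i)
    (hsub : ∀ i, 1 ≤ i → i ≤ k → Set.Icc (a i) (b i) ⊆ Set.Icc (0 : ℝ) 1)
    (h : ℕ → ℝ → ℝ)
    (hhc : ∀ i, 1 ≤ i → i ≤ k - 1 → ContinuousOn (h i) (Set.Icc (a i) (b i)))
    (hhb : ∀ i, 1 ≤ i → i ≤ k - 1 →
      Set.BijOn (h i) (Set.Icc (a i) (b i)) (Set.Icc (a (i + 1)) (b (i + 1))))
    (G : ℕ → ℝ → ℝ) (hGtop : G (k - 1) = id)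
    (hGrec : ∀ i, i < k - 1 → ∀ x, G i x = G (i + 1) (h (i + 1) x))
    (ℬ : Finset (Set ℝ))
    (hBmem : ∀ B ∈ ℬ, B.Nonempty ∧ ∃ u : ℕ → Set ℝ, (∀ i < k, u i ∈ 𝒰) ∧
      B = ⋂ i ∈ Finset.range k, G i '' (u i ∩ Set.Icc (a (i + 1)) (b (i + 1))))
    (hBcover : Set.Icc (a k) (b k) ⊆ ⋃ B ∈ ℬ, B)
    (hBmin : ∀ ℬ' : Finset (Set ℝ),
      (∀ B ∈ ℬ', B.Nonempty ∧ ∃ u : ℕ → Set ℝ, (∀ i < k, u i ∈ 𝒰) ∧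
        B = ⋂ i ∈ Finset.range k, G i '' (u i ∩ Set.Icc (a (i + 1)) (b (i + 1)))) →
      Set.Icc (a k) (b k) ⊆ (⋃ B ∈ ℬ', B) → ℬ.card ≤ ℬ'.card) :
    ℬ.card ≤ k ^ 2 * 𝒰.card ^ 2 :=
  stmt_10_general k hk 𝒰 hUopen a b h hhc hhb G hGtop hGrec ℬ hBmem hBcover hBmin
end
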